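/- Let V : ℝ → ℝ be differentiable and let f : ℝ² → ℂ be twice continuously differentiable in the coordinates (p,q). Then for all (p,q) ∈ ℝ²: −i·p·∂f/∂q (p,q) + i·V'(q)·∂f/∂p (p,q) = i·( (a₂†(a₁ f))(p,q) − (a₁†(a₂ f))(p,q) ) + (i/√2)·( (a₁ g)(p,q) − (a₁† g)(p,q) ), where g(p,q) = (V'(q) − q)·f(p,q). That is, the Liouville operator of the Hamiltonian H(p,q) = p²/2 + V(q) decomposes into the harmonic-oscillator part i(a₂†a₁ − a₁†a₂) plus a normal-ordered interaction part built from the multiplication operator V'(q) − q. -/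

import Mathlib

open Complex

lemma hasDerivAt_pfst (g : ℝ × ℝ → ℂ) (x : ℝ × ℝ) (hg : DifferentiableAt ℝ g x) :
    HasDerivAt (fun p => g (p, x.2)) (fderiv ℝ g x ((1:ℝ), (0:ℝ))) x.1 := by
  have h : HasDerivAt (fun p : ℝ => ((p, x.2) : ℝ × ℝ)) ((1:ℝ), (0:ℝ)) x.1 :=
    HasDerivAt.prodMk (hasDerivAt_id x.1) (hasDerivAt_const x.1 x.2)
  have := hg.hasFDerivAt.comp_hasDerivAt x.1 (by simpa using h)
  exact this

lemma hasDerivAt_psnd (g : ℝ × ℝ → ℂ) (x : ℝ × ℝ) (hg : DifferentiableAt ℝ g x) :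
    HasDerivAt (fun q => g (x.1, q)) (fderiv ℝ g x ((0:ℝ), (1:ℝ))) x.2 := by
  have h : HasDerivAt (fun q : ℝ => ((x.1, q) : ℝ × ℝ)) ((0:ℝ), (1:ℝ)) x.2 :=
    HasDerivAt.prodMk (hasDerivAt_const x.2 x.1) (hasDerivAt_id x.2)
  have := hg.hasFDerivAt.comp_hasDerivAt x.2 (by simpa using h)
  exact this


/-- Annihilation operator in the `p`-variable: `(a₁ f)(p,q) = (p f + ∂f/∂p)/√2`. -/
noncomputable def a1 (f : ℝ × ℝ → ℂ) : ℝ × ℝ → ℂ := fun x =>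
  ((x.1 : ℂ) * f x + deriv (fun p => f (p, x.2)) x.1) / (Real.sqrt 2 : ℂ)

/-- Creation operator in the `p`-variable: `(a₁† f)(p,q) = (p f − ∂f/∂p)/√2`. -/
noncomputable def a1d (f : ℝ × ℝ → ℂ) : ℝ × ℝ → ℂ := fun x =>
  ((x.1 : ℂ) * f x - deriv (fun p => f (p, x.2)) x.1) / (Real.sqrt 2 : ℂ)

/-- Annihilation operator in the `q`-variable: `(a₂ f)(p,q) = (q f + ∂f/∂q)/√2`. -/
noncomputable def a2 (f : ℝ × ℝ → ℂ) : ℝ × ℝ → ℂ := fun x =>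
  ((x.2 : ℂ) * f x + deriv (fun q => f (x.1, q)) x.2) / (Real.sqrt 2 : ℂ)

/-- Creation operator in the `q`-variable: `(a₂† f)(p,q) = (q f − ∂f/∂q)/√2`. -/
noncomputable def a2d (f : ℝ × ℝ → ℂ) : ℝ × ℝ → ℂ := fun x =>
  ((x.2 : ℂ) * f x - deriv (fun q => f (x.1, q)) x.2) / (Real.sqrt 2 : ℂ)

/-- The Liouville operator `−ip ∂/∂q + iV'(q) ∂/∂p` of the Hamiltonian
`H(p,q) = p²/2 + V(q)` decomposes into the harmonic-oscillator part
`i(a₂†a₁ − a₁†a₂)` plus a normal-ordered interaction part `(i/√2)(a₁ − a₁†)` applied to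
`g(p,q) = (V'(q) − q) f(p,q)`. -/
theorem liouville_general_normal_form (V : ℝ → ℝ) (hV : Differentiable ℝ V)
    (f : ℝ × ℝ → ℂ) (hf : ContDiff ℝ 2 f) :
    ∀ x : ℝ × ℝ,
      -Complex.I * (x.1 : ℂ) * deriv (fun q => f (x.1, q)) x.2 +
        Complex.I * ((deriv V x.2 : ℝ) : ℂ) * deriv (fun p => f (p, x.2)) x.1 =
      Complex.I * (a2d (a1 f) x - a1d (a2 f) x) +
        Complex.I / (Real.sqrt 2 : ℂ) *
          (a1 (fun y => ((deriv V y.2 - y.2 : ℝ) : ℂ) * f y) x -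
            a1d (fun y => ((deriv V y.2 - y.2 : ℝ) : ℂ) * f y) x) := by
  have hd : Differentiable ℝ f := hf.differentiable two_ne_zero
  have hf' : ContDiff ℝ 1 (fun y => fderiv ℝ f y) := hf.fderiv_right (by norm_num)
  have hd' : Differentiable ℝ (fun y => fderiv ℝ f y) := hf'.differentiable one_ne_zero
  set e1 : ℝ × ℝ := ((1:ℝ), (0:ℝ)) with he1
  set e2 : ℝ × ℝ := ((0:ℝ), (1:ℝ)) with he2
  set F1 : ℝ × ℝ → ℂ := fun y => fderiv ℝ f y e1 with hF1def
  set F2 : ℝ × ℝ → ℂ := fun y => fderiv ℝ f y e2 with hF2def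
  have hdF1 : Differentiable ℝ F1 := hd'.clm_apply (differentiable_const e1)
  have hdF2 : Differentiable ℝ F2 := hd'.clm_apply (differentiable_const e2)
  -- fderiv of F1, F2
  have hfd : ∀ (e : ℝ × ℝ) (x : ℝ × ℝ),
      fderiv ℝ (fun y => fderiv ℝ f y e) x = (fderiv ℝ (fun y => fderiv ℝ f y) x).flip e := by
    intro e x
    rw [fderiv_clm_apply (hd' x) (differentiableAt_const e)]
    simp
  intro x
  obtain ⟨p, q⟩ := x
  set B := fderiv ℝ (fun y => fderiv ℝ f y) (p, q) with hB
  have hsymm : B e2 e1 = B e1 e2 :=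
    second_derivative_symmetric (fun y => (hd y).hasFDerivAt) (hd' (p, q)).hasFDerivAt e2 e1
  -- pointwise rewrites of a1 f and a2 f
  have ha1 : (fun q' => a1 f (p, q')) =
      fun q' => ((p:ℂ) * f (p, q') + F1 (p, q')) / (Real.sqrt 2 : ℂ) := by
    funext q'
    simp only [a1, (hasDerivAt_pfst f (p, q') (hd _)).deriv, hF1def, he1]
  have ha2 : (fun p' => a2 f (p', q)) =
      fun p' => ((q:ℂ) * f (p', q) + F2 (p', q)) / (Real.sqrt 2 : ℂ) := by
    funext p'
    simp only [a2, (hasDerivAt_psnd f (p', q) (hd _)).deriv, hF2def, he2]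
  -- derivative of a1 f in q
  have hdq_a1 : deriv (fun q' => a1 f (p, q')) q =
      ((p:ℂ) * F2 (p, q) + B e2 e1) / (Real.sqrt 2 : ℂ) := by
    rw [ha1]
    have h1 : HasDerivAt (fun q' => (p:ℂ) * f (p, q')) ((p:ℂ) * F2 (p, q)) q :=
      (hasDerivAt_psnd f (p, q) (hd _)).const_mul (p:ℂ)
    have h2 : HasDerivAt (fun q' => F1 (p, q')) (B e2 e1) q := by
      have := hasDerivAt_psnd F1 (p, q) (hdF1 _)
      rwa [hF1def, hfd e1 (p, q), ← hB] at this
    exact ((h1.add h2).div_const _).deriv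
  have hdp_a2 : deriv (fun p' => a2 f (p', q)) p =
      ((q:ℂ) * F1 (p, q) + B e1 e2) / (Real.sqrt 2 : ℂ) := by
    rw [ha2]
    have h1 : HasDerivAt (fun p' => (q:ℂ) * f (p', q)) ((q:ℂ) * F1 (p, q)) p :=
      (hasDerivAt_pfst f (p, q) (hd _)).const_mul (q:ℂ)
    have h2 : HasDerivAt (fun p' => F2 (p', q)) (B e1 e2) p := by
      have := hasDerivAt_pfst F2 (p, q) (hdF2 _)
      rwa [hF2def, hfd e2 (p, q), ← hB] at this
    exact ((h1.add h2).div_const _).deriv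
  -- derivative of g in p
  set g : ℝ × ℝ → ℂ := fun y => ((deriv V y.2 - y.2 : ℝ) : ℂ) * f y with hg
  set c : ℂ := ((deriv V q - q : ℝ) : ℂ) with hc
  have hdg : deriv (fun p' => g (p', q)) p = c * F1 (p, q) :=
    ((hasDerivAt_pfst f (p, q) (hd _)).const_mul c).deriv
  -- base derivatives in the goal
  have hD1 : deriv (fun p' => f (p', q)) p = F1 (p, q) := (hasDerivAt_pfst f (p, q) (hd _)).deriv
  have hD2 : deriv (fun q' => f (p, q')) q = F2 (p, q) := (hasDerivAt_psnd f (p, q) (hd _)).deriv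
  have hs : (Real.sqrt 2 : ℂ) * (Real.sqrt 2 : ℂ) = 2 := by
    rw [← Complex.ofReal_mul]
    norm_num [Real.mul_self_sqrt]
  have hs0 : (Real.sqrt 2 : ℂ) ≠ 0 := by
    simpa using Real.sqrt_ne_zero'.mpr (by norm_num : (0:ℝ) < 2)
  have v1 : a2d (a1 f) (p, q) =
      ((q:ℂ) * a1 f (p, q) - deriv (fun q' => a1 f (p, q')) q) / (Real.sqrt 2 : ℂ) := rfl
  have v2 : a1d (a2 f) (p, q) =
      ((p:ℂ) * a2 f (p, q) - deriv (fun p' => a2 f (p', q)) p) / (Real.sqrt 2 : ℂ) := rfl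
  have v3 : a1 g (p, q) =
      ((p:ℂ) * g (p, q) + deriv (fun p' => g (p', q)) p) / (Real.sqrt 2 : ℂ) := rfl
  have v4 : a1d g (p, q) =
      ((p:ℂ) * g (p, q) - deriv (fun p' => g (p', q)) p) / (Real.sqrt 2 : ℂ) := rfl
  have w1 : a1 f (p, q) = ((p:ℂ) * f (p, q) + F1 (p, q)) / (Real.sqrt 2 : ℂ) := congrFun ha1 q
  have w2 : a2 f (p, q) = ((q:ℂ) * f (p, q) + F2 (p, q)) / (Real.sqrt 2 : ℂ) := congrFun ha2 p
  dsimp only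
  rw [v1, v2, v3, v4, hdq_a1, hdp_a2, hdg, hD1, hD2, w1, w2, hsymm]
  push_cast [hc]
  field_simp
  rw [sq, hs]
  ring
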